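/- arXiv:1510.02585 — 6 statements merged into one kernel-verified Lean document; each statement's English description precedes it below -/
import Mathlib

section
/- Let G be a group, V an n-dimensional vector space over a field k, and ρ: G → GL(V) a representation. If ρ is m-dense (i.e., the induced representation ∧^m ρ on ∧^m V is irreducible) for some 0 < m < n, then ρ is m-thick (i.e., for any subspaces V₁, V₂ of V with dim V₁ = m and dim V₂ = n−m, there exists g ∈ G with ρ(g)V₁ ⊕ V₂ = V). -/
open Module ExteriorAlgebra

variable {k G V : Type*} [Field k] [AddCommGroup V] [Module k V] [Group G]

/-- A representation is `m`-thick (with `n = dim V`). -/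
def IsMThick (ρ : G →* (V ≃ₗ[k] V)) (n m : ℕ) : Prop :=
  ∀ V₁ V₂ : Submodule k V,
    Module.finrank k V₁ = m → Module.finrank k V₂ = n - m →
    ∃ g : G, IsCompl (V₁.map (ρ g : V →ₗ[k] V)) V₂

/-- Invariance of a subspace under the representation. -/
def RepInvariant (ρ : G →* (V ≃ₗ[k] V)) (W : Submodule k V) : Prop :=
  ∀ g : G, W.map (ρ g : V →ₗ[k] V) ≤ W

/-- Irreducibility of a representation. -/
def IsIrreducibleRep (ρ : G →* (V ≃ₗ[k] V)) : Prop :=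
  Nontrivial V ∧ ∀ W : Submodule k V, RepInvariant ρ W → W = ⊥ ∨ W = ⊤

/-- The induced action on the exterior algebra. -/
noncomputable def extAction (ρ : G →* (V ≃ₗ[k] V)) (g : G) :
    ExteriorAlgebra k V →ₗ[k] ExteriorAlgebra k V :=
  (ExteriorAlgebra.map (ρ g : V →ₗ[k] V)).toLinearMap

/-- A representation is `m`-dense if the induced representation on `⋀^m V` is irreducible. -/
def IsMDense (ρ : G →* (V ≃ₗ[k] V)) (m : ℕ) : Prop :=
  ∀ W : Submodule k (ExteriorAlgebra k V), W ≤ ⋀[k]^m V →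
    (∀ g : G, W.map (extAction ρ g) ≤ W) → W = ⊥ ∨ W = ⋀[k]^m V

/-- A subspace of `⋀^m V` is realizable if it contains a nonzero decomposable vector. -/
def IsRealizable (k : Type*) [Field k] {V : Type*} [AddCommGroup V] [Module k V]
    (m : ℕ) (W : Submodule k (ExteriorAlgebra k V)) : Prop :=
  ∃ v : Fin m → V, ExteriorAlgebra.ιMulti k m v ≠ 0 ∧ ExteriorAlgebra.ιMulti k m v ∈ W

/-- The perp of a subspace of `⋀^m V` inside `⋀^j V` with respect to the wedge pairing. -/
def wedgePerp (W : Submodule k (ExteriorAlgebra k V)) (j : ℕ) :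
    Submodule k (ExteriorAlgebra k V) where
  carrier := {y | y ∈ ⋀[k]^j V ∧ ∀ x ∈ W, x * y = 0}
  add_mem' := by
    rintro a b ⟨ha, ha'⟩ ⟨hb, hb'⟩
    exact ⟨add_mem ha hb, fun x hx => by rw [mul_add, ha' x hx, hb' x hx, add_zero]⟩
  zero_mem' := ⟨Submodule.zero_mem _, fun x _ => mul_zero x⟩
  smul_mem' := by
    rintro c a ⟨ha, ha'⟩
    exact ⟨Submodule.smul_mem _ c ha, fun x hx => by rw [mul_smul_comm, ha' x hx, smul_zero]⟩

/-! Write `ω(A)` for the wedge of a basis of a subspace `A`. For subspaces `A`, `B` with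
`dim A + dim B = n`, `ω(A) ∧ ω(B) ≠ 0` exactly when `A ⊕ B = V`. By density, the `G`-orbit of
`ω(V₁) ≠ 0` spans `⋀^m V`. It contains `ω(U)` for a complement `U` of `V₂`, and
`ω(U) ∧ ω(V₂) ≠ 0`, so wedging with `ω(V₂)` cannot vanish on the whole orbit: some
`ρ g • ω(V₁) = ω(ρ g V₁)` satisfies `ω(ρ g V₁) ∧ ω(V₂) ≠ 0`. -/

lemma ιMulti_ne_zero_of_linearIndependent {m : ℕ} {v : Fin m → V} (hv : LinearIndependent k v) :
    ιMulti k m v ≠ 0 := by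
  -- `ιMulti v` is the member indexed by `univ` of the linearly independent family of
  -- `m`-fold wedges of `v`.
  have hcard : (Finset.univ : Finset (Fin m)).card = m := Finset.card_fin m
  have h := (exteriorPower.ιMulti_family_linearIndependent_field (n := m) hv).ne_zero
    ⟨Finset.univ, hcard⟩
  have hid : Set.powersetCard.ofFinEmbEquiv.symm ⟨Finset.univ, hcard⟩ =
      RelEmbedding.refl (· ≤ ·) :=
    (Finset.orderEmbOfFin_unique' hcard fun i => Finset.mem_univ _).symm
  rwa [exteriorPower.ιMulti_family, hid, Ne, ← Submodule.coe_eq_zero,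
    exteriorPower.ιMulti_apply_coe] at h

lemma ιMulti_ne_zero_iff_linearIndependent {m : ℕ} {v : Fin m → V} :
    ιMulti k m v ≠ 0 ↔ LinearIndependent k v :=
  ⟨fun h => by_contra fun hv => h ((ιMulti k m).map_linearDependent v hv),
    ιMulti_ne_zero_of_linearIndependent⟩

lemma ιMulti_mul_ιMulti_ne_zero_iff {p q : ℕ} {v : Fin p → V} {w : Fin q → V} :
    ιMulti k p v * ιMulti k q w ≠ 0 ↔ LinearIndependent k (Sum.elim v w) := by
  rw [ιMulti_mul_ιMulti, ιMulti_ne_zero_iff_linearIndependent, ← Fin.append_comp_sumElim]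
  exact (linearIndependent_equiv finSumFinEquiv).symm

lemma ιMulti_mul_ιMulti_ne_zero_of_isCompl {p q : ℕ} {v : Fin p → V} {w : Fin q → V}
    (hv : LinearIndependent k v) (hw : LinearIndependent k w)
    (h : IsCompl (Submodule.span k (Set.range v)) (Submodule.span k (Set.range w))) :
    ιMulti k p v * ιMulti k q w ≠ 0 :=
  ιMulti_mul_ιMulti_ne_zero_iff.2 (hv.sum_type hw h.disjoint)

lemma isCompl_span_range_of_ιMulti_mul_ιMulti_ne_zero [FiniteDimensional k V] {p q : ℕ}
    {v : Fin p → V} {w : Fin q → V} (hpq : p + q = finrank k V)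
    (h : ιMulti k p v * ιMulti k q w ≠ 0) :
    IsCompl (Submodule.span k (Set.range v)) (Submodule.span k (Set.range w)) := by
  have hvw := ιMulti_mul_ιMulti_ne_zero_iff.1 h
  refine ⟨(linearIndependent_sum.1 hvw).2.2, codisjoint_iff.2 ?_⟩
  rw [← Submodule.span_union, ← Set.Sum.elim_range]
  exact hvw.span_eq_top_of_card_eq_finrank' (by simp [hpq])

lemma Submodule.exists_linearIndependent_span_range_eq [FiniteDimensional k V] {m : ℕ}
    {W : Submodule k V} (hW : finrank k W = m) :
    ∃ v : Fin m → V, LinearIndependent k v ∧ Submodule.span k (Set.range v) = W := by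
  let b := finBasisOfFinrankEq k W hW
  refine ⟨W.subtype ∘ b, b.linearIndependent.map' W.subtype W.ker_subtype, ?_⟩
  rw [Set.range_comp, ← Submodule.map_span, b.span_eq, Submodule.map_top, Submodule.range_subtype]

section ExtAction

variable (ρ : G →* (V ≃ₗ[k] V))

lemma extAction_ιMulti (g : G) {m : ℕ} (v : Fin m → V) :
    extAction ρ g (ιMulti k m v) = ιMulti k m (ρ g ∘ v) :=
  ExteriorAlgebra.map_apply_ιMulti _ v

lemma extAction_one_apply (x : ExteriorAlgebra k V) : extAction ρ 1 x = x := by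
  simp [extAction]

lemma extAction_mul_apply (g h : G) (x : ExteriorAlgebra k V) :
    extAction ρ g (extAction ρ h x) = extAction ρ (g * h) x := by
  simp only [extAction, AlgHom.toLinearMap_apply, ← AlgHom.comp_apply, map_comp_map, map_mul]
  rfl

lemma map_extAction_exteriorPower_le (g : G) (m : ℕ) :
    (⋀[k]^m V).map (extAction ρ g) ≤ ⋀[k]^m V := by
  rw [← ιMulti_span_fixedDegree, Submodule.map_span_le]
  rintro _ ⟨v, rfl⟩
  rw [extAction_ιMulti]
  exact Submodule.subset_span ⟨_, rfl⟩

end ExtAction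

namespace IsMDense

variable {ρ : G →* (V ≃ₗ[k] V)} {m : ℕ}

lemma span_orbit_eq (hdense : IsMDense ρ m) {x : ExteriorAlgebra k V} (hx : x ∈ ⋀[k]^m V)
    (hx0 : x ≠ 0) : Submodule.span k (Set.range fun g => extAction ρ g x) = ⋀[k]^m V := by
  refine (hdense _ ?_ fun g => ?_).resolve_left fun h => hx0 ?_
  · rw [Submodule.span_le]
    rintro _ ⟨g, rfl⟩
    exact map_extAction_exteriorPower_le ρ g m ⟨x, hx, rfl⟩
  · rw [Submodule.map_span_le]
    rintro _ ⟨h, rfl⟩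
    rw [extAction_mul_apply]
    exact Submodule.subset_span ⟨g * h, rfl⟩
  · have hx₁ : extAction ρ 1 x ∈ Submodule.span k (Set.range fun g => extAction ρ g x) :=
      Submodule.subset_span ⟨1, rfl⟩
    rwa [extAction_one_apply, h, Submodule.mem_bot] at hx₁

lemma exists_extAction_mul_ne_zero (hdense : IsMDense ρ m) {x y : ExteriorAlgebra k V}
    (hx : x ∈ ⋀[k]^m V) (hx0 : x ≠ 0) (hy : y ∈ ⋀[k]^m V) {z : ExteriorAlgebra k V}
    (hyz : y * z ≠ 0) : ∃ g, extAction ρ g x * z ≠ 0 := by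
  by_contra! h
  have : ⋀[k]^m V ≤ LinearMap.ker (LinearMap.mulRight k z) := by
    rw [← hdense.span_orbit_eq hx hx0, Submodule.span_le]
    rintro _ ⟨g, rfl⟩
    exact h g
  exact hyz (this hy)

end IsMDense

theorem mdense_implies_mthick_general [FiniteDimensional k V] {n m : ℕ}
    (hn : Module.finrank k V = n)
    (ρ : G →* (V ≃ₗ[k] V)) (hdense : IsMDense ρ m) :
    IsMThick ρ n m := by
  intro V₁ V₂ h₁ h₂
  have hdim : m + (n - m) = finrank k V := by
    have := h₁ ▸ Submodule.finrank_le V₁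
    omega
  obtain ⟨v, hv, rfl⟩ := Submodule.exists_linearIndependent_span_range_eq h₁
  obtain ⟨w, hw, rfl⟩ := Submodule.exists_linearIndependent_span_range_eq h₂
  obtain ⟨U, hU⟩ := Submodule.exists_isCompl (Submodule.span k (Set.range w))
  have hUm : finrank k U = m := by
    have := Submodule.finrank_add_eq_of_isCompl hU
    omega
  obtain ⟨u, hu, rfl⟩ := Submodule.exists_linearIndependent_span_range_eq hUm
  obtain ⟨g, hg⟩ := hdense.exists_extAction_mul_ne_zero (ιMulti_range k m ⟨v, rfl⟩)
    (ιMulti_ne_zero_of_linearIndependent hv) (ιMulti_range k m ⟨u, rfl⟩)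
    (ιMulti_mul_ιMulti_ne_zero_of_isCompl hu hw hU.symm)
  rw [extAction_ιMulti] at hg
  refine ⟨g, ?_⟩
  rw [Submodule.map_span, ← Set.range_comp]
  exact isCompl_span_range_of_ιMulti_mul_ιMulti_ne_zero hdim hg

/-- m-dense implies m-thick. -/
theorem mdense_implies_mthick [FiniteDimensional k V] {n m : ℕ}
    (hn : Module.finrank k V = n) (hm0 : 0 < m) (hmn : m < n)
    (ρ : G →* (V ≃ₗ[k] V)) (hdense : IsMDense ρ m) :
    IsMThick ρ n m :=
  mdense_implies_mthick_general hn ρ hdense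
end

section
/- Let ρ: G → GL(V) be an n-dimensional representation of a group G. For 0 < m < n, ρ is 1-thick if and only if ρ is irreducible. -/
open Module ExteriorAlgebra

variable {k G V : Type*} [Field k] [AddCommGroup V] [Module k V] [Group G]

/-- 1-thick iff irreducible. -/
theorem one_thick_iff_irreducible [FiniteDimensional k V] {n m : ℕ}
    (hn : Module.finrank k V = n) (hm0 : 0 < m) (hmn : m < n)
    (ρ : G →* (V ≃ₗ[k] V)) :
    IsMThick ρ n 1 ↔ IsIrreducibleRep ρ := by
  have hn1 : 1 ≤ n := hm0.trans_le hmn.le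
  constructor
  · intro hthick
    have hnt : Nontrivial V := by
      have : 0 < finrank k V := by omega
      exact Module.nontrivial_of_finrank_pos this
    refine ⟨hnt, fun W hW => ?_⟩
    by_contra hcon
    push_neg at hcon
    obtain ⟨hWb, hWt⟩ := hcon
    -- pick a nonzero w ∈ W
    obtain ⟨w, hwW, hw0⟩ := Submodule.exists_mem_ne_zero_of_ne_bot hWb
    set V₁ : Submodule k V := Submodule.span k {w} with hV₁
    have hV₁W : V₁ ≤ W := Submodule.span_le.mpr (by simpa using hwW)
    have hV₁rank : finrank k V₁ = 1 := finrank_span_singleton hw0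
    -- hyperplane containing W
    obtain ⟨f, hf0, hfmap⟩ := Submodule.exists_dual_map_eq_bot_of_lt_top (lt_top_iff_ne_top.mpr hWt) inferInstance
    have hWker : W ≤ LinearMap.ker f := fun x hx => by
      have : f x ∈ W.map f := ⟨x, hx, rfl⟩
      rw [hfmap] at this
      simpa using this
    have hrange : finrank k (LinearMap.range f) = 1 := by
      have h1 : finrank k (LinearMap.range f) ≤ 1 := by
        have := Submodule.finrank_le (LinearMap.range f)
        simpa using this
      have h2 : finrank k (LinearMap.range f) ≠ 0 := by
        exact fun h => hf0 (LinearMap.range_eq_bot.mp (Submodule.finrank_eq_zero.mp h))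
      omega
    have hker : finrank k (LinearMap.ker f) = n - 1 := by
      have := LinearMap.finrank_range_add_finrank_ker f
      omega
    obtain ⟨g, hg⟩ := hthick V₁ (LinearMap.ker f) hV₁rank hker
    have hle : V₁.map (ρ g : V →ₗ[k] V) ≤ LinearMap.ker f :=
      le_trans (Submodule.map_mono hV₁W) (le_trans (hW g) hWker)
    have htop := hg.sup_eq_top
    rw [sup_eq_right.mpr hle] at htop
    have : finrank k (LinearMap.ker f) = n := by rw [htop]; simpa using hn
    omega
  · rintro ⟨hnt, hirr⟩
    intro V₁ V₂ h1 h2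
    set U : Submodule k V := ⨆ g : G, V₁.map (ρ g : V →ₗ[k] V) with hU
    have hUinv : RepInvariant ρ U := by
      intro h
      rw [hU, Submodule.map_iSup]
      apply iSup_le
      intro g
      rw [← Submodule.map_comp]
      have : ((ρ h : V →ₗ[k] V).comp (ρ g : V →ₗ[k] V)) = (ρ (h * g) : V →ₗ[k] V) := by
        ext x; simp [map_mul]
      rw [this]
      exact le_iSup (fun g : G => V₁.map (ρ g : V →ₗ[k] V)) (h * g)
    have hUb : U ≠ ⊥ := by
      intro h
      have h1' : V₁.map (ρ (1:G) : V →ₗ[k] V) ≤ U :=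
        le_iSup (fun g : G => V₁.map (ρ g : V →ₗ[k] V)) 1
      rw [h, le_bot_iff] at h1'
      have : V₁ = ⊥ := by
        simpa using h1'
      rw [this] at h1
      simp at h1
    have hUtop : U = ⊤ := (hirr U hUinv).resolve_left hUb
    -- exists g with map V₁ not ≤ V₂
    have : ∃ g : G, ¬ V₁.map (ρ g : V →ₗ[k] V) ≤ V₂ := by
      by_contra hall
      push_neg at hall
      have : U ≤ V₂ := iSup_le hall
      rw [hUtop, top_le_iff] at this
      have : finrank k V₂ = n := by rw [this]; simpa using hn
      omega
    obtain ⟨g, hg⟩ := this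
    refine ⟨g, ?_, ?_⟩
    · -- disjoint
      rw [disjoint_iff]
      by_contra hne
      have hle : V₁.map (ρ g : V →ₗ[k] V) ⊓ V₂ ≤ V₁.map (ρ g : V →ₗ[k] V) := inf_le_left
      have hrank1 : finrank k (V₁.map (ρ g : V →ₗ[k] V)) = 1 := by
        rw [LinearEquiv.finrank_map_eq (ρ g) V₁]; exact h1
      have hpos : 0 < finrank k (V₁.map (ρ g : V →ₗ[k] V) ⊓ V₂ : Submodule k V) := by
        have : finrank k (V₁.map (ρ g : V →ₗ[k] V) ⊓ V₂ : Submodule k V) ≠ 0 := by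
          exact fun h => hne (Submodule.finrank_eq_zero.mp h)
        omega
      have hle1 : finrank k (V₁.map (ρ g : V →ₗ[k] V) ⊓ V₂ : Submodule k V) ≤ 1 := by
        rw [← hrank1]; exact Submodule.finrank_mono hle
      have heq : V₁.map (ρ g : V →ₗ[k] V) ⊓ V₂ = V₁.map (ρ g : V →ₗ[k] V) :=
        Submodule.eq_of_le_of_finrank_eq hle (by omega)
      exact hg (by rw [← heq]; exact inf_le_right)
    · -- codisjoint
      rw [codisjoint_iff]
      apply Submodule.eq_top_of_disjoint
      · rw [LinearEquiv.finrank_map_eq (ρ g) V₁, h1, h2, hn]; omega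
      · rw [disjoint_iff]
        by_contra hne
        have hpos : 0 < finrank k (V₁.map (ρ g : V →ₗ[k] V) ⊓ V₂ : Submodule k V) := by
          have : finrank k (V₁.map (ρ g : V →ₗ[k] V) ⊓ V₂ : Submodule k V) ≠ 0 := by
            exact fun h => hne (Submodule.finrank_eq_zero.mp h)
          omega
        have hrank1 : finrank k (V₁.map (ρ g : V →ₗ[k] V)) = 1 := by
          rw [LinearEquiv.finrank_map_eq (ρ g) V₁]; exact h1
        have hle1 : finrank k (V₁.map (ρ g : V →ₗ[k] V) ⊓ V₂ : Submodule k V) ≤ 1 := by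
          rw [← hrank1]; exact Submodule.finrank_mono inf_le_left
        have heq : V₁.map (ρ g : V →ₗ[k] V) ⊓ V₂ = V₁.map (ρ g : V →ₗ[k] V) :=
          Submodule.eq_of_le_of_finrank_eq inf_le_left (by omega)
        exact hg (by rw [← heq]; exact inf_le_right)
end

section
/- Let ρ: G → GL(V) be an n-dimensional representation. For 0 < m < n, ρ is m-thick if and only if ρ is (n−m)-thick. -/
open Module ExteriorAlgebra

variable {k G V : Type*} [Field k] [AddCommGroup V] [Module k V] [Group G]

lemma isCompl_map_equiv (e : V ≃ₗ[k] V) {p q : Submodule k V} (h : IsCompl p q) :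
    IsCompl (p.map (e : V →ₗ[k] V)) (q.map (e : V →ₗ[k] V)) := by
  have := (Submodule.orderIsoMapComap e).isCompl h
  simpa using this

lemma mthick_swap {n a b : ℕ} (ρ : G →* (V ≃ₗ[k] V)) (ha : IsMThick ρ n a)
    (hab : n - a = b) (hba : n - b = a) : IsMThick ρ n b := by
  intro V₁ V₂ h1 h2
  obtain ⟨g, hg⟩ := ha V₂ V₁ (by rw [h2, hba]) (by rw [h1, hab])
  refine ⟨g⁻¹, ?_⟩
  have key := (isCompl_map_equiv (ρ g⁻¹) hg).symm
  have : (V₂.map (ρ g : V →ₗ[k] V)).map ((ρ g⁻¹ : V ≃ₗ[k] V) : V →ₗ[k] V) = V₂ := by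
    rw [← Submodule.map_comp]
    have h1 : (ρ g⁻¹ : V ≃ₗ[k] V) = (ρ g).symm := by
      rw [map_inv]; rfl
    rw [h1]
    have : ((ρ g).symm : V →ₗ[k] V).comp ((ρ g : V ≃ₗ[k] V) : V →ₗ[k] V)
        = LinearMap.id := by
      ext x; simp
    rw [this, Submodule.map_id]
  rwa [this] at key

/-- m-thick iff (n-m)-thick. -/
theorem mthick_iff_thick_compl [FiniteDimensional k V] {n m : ℕ}
    (hn : Module.finrank k V = n) (hm0 : 0 < m) (hmn : m < n)
    (ρ : G →* (V ≃ₗ[k] V)) :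
    IsMThick ρ n m ↔ IsMThick ρ n (n - m) := by
  have hmn' : m ≤ n := hmn.le
  constructor
  · exact fun h => mthick_swap ρ h rfl (by omega)
  · exact fun h => mthick_swap ρ h (by omega) rfl
end

section
/- Let ρ: G → GL(V) be an n-dimensional irreducible representation of a group G and let 0 < m < n. If W ⊆ ∧^m V is a nonzero G-invariant realizable subspace, then dim W ≥ ⌊(n−1)/m⌋ + 1. -/
open Module ExteriorAlgebra

variable {k G V : Type*} [Field k] [AddCommGroup V] [Module k V] [Group G]

section Aux
variable {k V : Type*} [Field k] [AddCommGroup V] [Module k V]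


/-- repeated factor kills the product -/
lemma aux_iota_mul_iotaMulti_eq_zero {m : ℕ} (w : Fin m → V) (a : Fin m) :
    ι k (w a) * ιMulti k m w = 0 := by
  have h := ιMulti_succ_apply (R := k) (Matrix.vecCons (w a) w)
  rw [Matrix.cons_val_zero] at h
  have ht : Matrix.vecTail (Matrix.vecCons (w a) w) = w := Matrix.tail_cons _ _
  rw [ht] at h
  rw [← h]
  exact AlternatingMap.map_eq_zero_of_eq _ _ (by simp) (Fin.succ_ne_zero a).symm

/-- contraction kills ιMulti of vectors killed by φ -/
lemma aux_contract_iotaMulti (φ : Module.Dual k V) :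
    ∀ (n : ℕ) (w : Fin n → V), (∀ i, φ (w i) = 0) →
      CliffordAlgebra.contractLeft (Q := (0 : QuadraticForm k V)) φ (ιMulti k n w) = 0 := by
  intro n
  induction n with
  | zero =>
    intro w _
    rw [ιMulti_zero_apply]
    have := CliffordAlgebra.contractLeft_algebraMap_mul (Q := (0 : QuadraticForm k V)) (d := φ) 1 1
    simpa using this
  | succ n ih =>
    intro w hw
    rw [ιMulti_succ_apply]
    rw [CliffordAlgebra.contractLeft_ι_mul]
    rw [hw 0, zero_smul, ih (Matrix.vecTail w) (fun i => hw i.succ), mul_zero, sub_zero]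

/-- the span of products of vectors from S -/
def auxM (m : ℕ) (S : Submodule k V) : Submodule k (ExteriorAlgebra k V) :=
  Submodule.span k {y | ∃ w : Fin m → V, (∀ i, w i ∈ S) ∧ y = ιMulti k m w}

/-- key nondegeneracy lemma -/
lemma aux_key {m : ℕ} (S : Submodule k V) {u : V} (hu : u ∉ S)
    {x : ExteriorAlgebra k V} (hx : x ∈ auxM m S) (hux : ι k u * x = 0) : x = 0 := by
  -- build a functional vanishing on S with φ u = 1
  have h0 : S.mkQ u ≠ 0 := by
    simpa [Submodule.Quotient.mk_eq_zero] using hu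
  have h1 : ¬ ∀ ψ : Module.Dual k (V ⧸ S), ψ (S.mkQ u) = 0 := by
    rw [Module.forall_dual_apply_eq_zero_iff]
    exact h0
  push_neg at h1
  obtain ⟨ψ, hψ⟩ := h1
  set φ : Module.Dual k V := (ψ (S.mkQ u))⁻¹ • (ψ.comp S.mkQ) with hφdef
  have hφu : φ u = 1 := by
    simp only [hφdef, LinearMap.smul_apply, LinearMap.comp_apply, smul_eq_mul]
    exact inv_mul_cancel₀ hψ
  have hφS : ∀ s ∈ S, φ s = 0 := by
    intro s hs
    have hms : S.mkQ s = 0 := (Submodule.Quotient.mk_eq_zero S).2 hs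
    simp only [hφdef, LinearMap.smul_apply, LinearMap.comp_apply, hms, map_zero, smul_zero]
  set d := CliffordAlgebra.contractLeft (Q := (0 : QuadraticForm k V)) φ with hd
  have hdx : d x = 0 := by
    have hsub : {y : ExteriorAlgebra k V | ∃ w : Fin m → V, (∀ i, w i ∈ S) ∧ y = ιMulti k m w}
        ⊆ (LinearMap.ker d : Set (ExteriorAlgebra k V)) := by
      rintro y ⟨w, hw, rfl⟩
      exact aux_contract_iotaMulti φ m w (fun i => hφS _ (hw i))
    have := Submodule.span_le.2 hsub hx
    exact this
  have h2 := CliffordAlgebra.contractLeft_ι_mul (Q := (0 : QuadraticForm k V)) (d := φ) u x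
  rw [hux] at h2
  rw [map_zero] at h2
  rw [hφu, one_smul] at h2
  rw [← hd, hdx, mul_zero, sub_zero] at h2
  exact h2.symm

lemma aux_fd [FiniteDimensional k V] (m : ℕ) :
    FiniteDimensional k ↥(⋀[k]^m V : Submodule k (ExteriorAlgebra k V)) := by
  classical
  set N := Module.finrank k V
  set b := Module.finBasis k V
  set Fam : (Fin m → Fin N) → ExteriorAlgebra k V :=
    fun f => ιMulti k m (fun i => b (f i)) with hFam
  have hspan : (⋀[k]^m V : Submodule k (ExteriorAlgebra k V)) ≤
      Submodule.span k (Set.range Fam) := by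
    rw [← ιMulti_span_fixedDegree]
    refine Submodule.span_le.2 ?_
    rintro _ ⟨v, rfl⟩
    have hv : (fun i => v i) = fun i => ∑ j : Fin N, b.repr (v i) j • b j := by
      funext i
      exact (b.sum_repr (v i)).symm
    have hexp : ιMulti k m v
        = ∑ r : Fin m → Fin N, ιMulti k m (fun i => b.repr (v i) (r i) • b (r i)) := by
      calc ιMulti k m v = ιMulti k m (fun i => ∑ j : Fin N, b.repr (v i) j • b j) := by
            rw [← hv]
        _ = ∑ r : Fin m → Fin N, ιMulti k m (fun i => b.repr (v i) (r i) • b (r i)) :=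
            MultilinearMap.map_sum (ιMulti k m).toMultilinearMap
              (g := fun i j => b.repr (v i) j • b j)
    rw [hexp]
    refine Submodule.sum_mem _ (fun r _ => ?_)
    have hterm : ιMulti k m (fun i => b.repr (v i) (r i) • b (r i))
        = (∏ i, b.repr (v i) (r i)) • Fam r := by
      exact MultilinearMap.map_smul_univ (ιMulti k m).toMultilinearMap
        (fun i => b.repr (v i) (r i)) (fun i => b (r i))
    rw [hterm]
    exact Submodule.smul_mem _ _ (Submodule.subset_span ⟨r, rfl⟩)
  have : FiniteDimensional k ↥(Submodule.span k (Set.range Fam)) :=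
    FiniteDimensional.span_of_finite k (Set.finite_range Fam)
  exact Submodule.finiteDimensional_of_le hspan

end Aux

/-- a nonzero G-invariant realizable subspace of `⋀^m V` for an
irreducible ρ has dimension at least `⌊(n-1)/m⌋ + 1`. -/
theorem realizable_dim_lower_bound [FiniteDimensional k V] {n m : ℕ}
    (hn : Module.finrank k V = n) (hm0 : 0 < m) (hmn : m < n)
    (ρ : G →* (V ≃ₗ[k] V)) (hirr : IsIrreducibleRep ρ)
    (W : Submodule k (ExteriorAlgebra k V)) (hW : W ≤ ⋀[k]^m V) (hW0 : W ≠ ⊥)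
    (hinv : ∀ g : G, W.map (extAction ρ g) ≤ W)
    (hreal : IsRealizable k m W) :
    (n - 1) / m + 1 ≤ Module.finrank k W := by 
  classical
  obtain ⟨v, hv0, hvW⟩ := hreal
  set F : G → ExteriorAlgebra k V := fun g => ιMulti k m ((ρ g : V →ₗ[k] V) ∘ v) with hF
  have hFg : ∀ g : G, extAction ρ g (ιMulti k m v) = F g := fun g =>
    map_apply_ιMulti ((ρ g : V →ₗ[k] V)) v
  have hFW : ∀ g : G, F g ∈ W := fun g => hinv g ⟨_, hvW, hFg g⟩
  have hF0 : ∀ g : G, F g ≠ 0 := by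
    intro g hg
    apply hv0
    have h1 : extAction ρ g⁻¹ (F g) = ιMulti k m v := by
      show ExteriorAlgebra.map _ (ιMulti k m ((ρ g : V →ₗ[k] V) ∘ v)) = _
      rw [map_apply_ιMulti]
      congr 1
      funext i
      show ρ g⁻¹ (ρ g (v i)) = v i
      have h2 : ρ g⁻¹ * ρ g = 1 := by rw [← map_mul, inv_mul_cancel, map_one]
      calc ρ g⁻¹ (ρ g (v i)) = (ρ g⁻¹ * ρ g) (v i) := rfl
        _ = v i := by rw [h2]; rfl
    rw [hg, map_zero] at h1
    exact h1.symm
  have key : ∀ j : ℕ, j ≤ (n - 1) / m + 1 →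
      ∃ c : Fin j → G, LinearIndependent k (fun i => F (c i)) := by
    intro j
    induction j with
    | zero => exact fun _ => ⟨Fin.elim0, linearIndependent_empty_type⟩
    | succ j ih =>
      intro hj
      obtain ⟨c, hc⟩ := ih (Nat.le_of_succ_le hj)
      have hjle : j ≤ (n - 1) / m := Nat.succ_le_succ_iff.mp hj
      set T : Submodule k V :=
        Submodule.span k (Set.range fun p : Fin j × Fin m => ρ (c p.1) (v p.2)) with hT
      have hTrank : finrank k T ≤ j * m := by
        have h1 := finrank_range_le_card (R := k) (fun p : Fin j × Fin m => ρ (c p.1) (v p.2))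
        simpa [Set.finrank, Fintype.card_prod] using h1
      have hT_ne_top : T ≠ ⊤ := by
        intro h
        have h2 : finrank k ↥T = n := by rw [h, finrank_top, hn]
        have hjm : j * m ≤ n - 1 :=
          le_trans (Nat.mul_le_mul_right m hjle) (Nat.div_mul_le_self _ _)
        omega
      set U : Submodule k V :=
        Submodule.span k (Set.range fun p : G × Fin m => ρ p.1 (v p.2)) with hU
      have hUinv : RepInvariant ρ U := by
        intro g
        rw [hU, Submodule.map_span]
        refine Submodule.span_le.2 ?_
        rintro _ ⟨_, ⟨p, rfl⟩, rfl⟩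
        refine Submodule.subset_span ⟨(g * p.1, p.2), ?_⟩
        show ρ (g * p.1) (v p.2) = (ρ g : V →ₗ[k] V) (ρ p.1 (v p.2))
        rw [map_mul]
        rfl
      have hvi : v ⟨0, hm0⟩ ≠ 0 := by
        intro h
        apply hv0
        exact (ιMulti k m).map_coord_zero ⟨0, hm0⟩ h
      have hUne : U ≠ ⊥ := by
        intro h
        apply hvi
        have hmem : v ⟨0, hm0⟩ ∈ U := by
          refine Submodule.subset_span ⟨(1, ⟨0, hm0⟩), ?_⟩
          show ρ 1 (v ⟨0, hm0⟩) = v ⟨0, hm0⟩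
          rw [map_one]
          rfl
        rw [h, Submodule.mem_bot] at hmem
        exact hmem
      have hUtop : U = ⊤ := (hirr.2 U hUinv).resolve_left hUne
      have hex : ∃ (g : G) (a : Fin m), ρ g (v a) ∉ T := by
        by_contra h
        push_neg at h
        apply hT_ne_top
        rw [← top_le_iff, ← hUtop]
        refine Submodule.span_le.2 ?_
        rintro _ ⟨p, rfl⟩
        exact h p.1 p.2
      obtain ⟨g, a, hga⟩ := hex
      set c' : Fin (j + 1) → G := Fin.cons g c with hc'
      refine ⟨c', ?_⟩
      have hcomp : (fun i : Fin (j + 1) => F (c' i))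
          = Fin.cons (F g) (fun i => F (c i)) := by
        funext i
        refine Fin.cases ?_ (fun i' => ?_) i <;> simp [hc']
      rw [hcomp, linearIndependent_fin_cons]
      refine ⟨hc, fun hmem => ?_⟩
      have hsub : Submodule.span k (Set.range fun i : Fin j => F (c i)) ≤ auxM m T := by
        refine Submodule.span_le.2 ?_
        rintro _ ⟨i, rfl⟩
        exact Submodule.subset_span
          ⟨_, fun a' => Submodule.subset_span ⟨(i, a'), rfl⟩, rfl⟩
      have hFgM : F g ∈ auxM m T := hsub hmem
      have hzero : ι k (((ρ g : V →ₗ[k] V) ∘ v) a) * F g = 0 :=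
        aux_iota_mul_iotaMulti_eq_zero ((ρ g : V →ₗ[k] V) ∘ v) a
      exact hF0 g (aux_key T hga hFgM hzero)
  obtain ⟨c, hc⟩ := key ((n - 1) / m + 1) le_rfl
  haveI : FiniteDimensional k ↥(⋀[k]^m V : Submodule k (ExteriorAlgebra k V)) := aux_fd m
  haveI : FiniteDimensional k ↥W := Submodule.finiteDimensional_of_le hW
  have hcW : LinearIndependent k
      (fun i : Fin ((n - 1) / m + 1) => (⟨F (c i), hFW (c i)⟩ : W)) :=
    LinearIndependent.of_comp W.subtype hc
  have hfin := hcW.fintype_card_le_finrank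
  simpa using hfin
end

section
/- Let V be an n-dimensional vector space over an infinite field k, v ∈ V a nonzero vector, and S ⊂ k^× a finite subset. Then there exists f ∈ GL(V) with n distinct eigenvalues all lying in k^× \ S, with an eigenbasis v₁, …, v_n such that v = v₁ + ⋯ + v_n; in particular, v is not contained in any proper f-invariant subspace of V. -/
/-!
Since `GL(V)` acts transitively on nonzero vectors, `v` is the sum of the vectors of some basis.
Prescribing on that basis distinct eigenvalues outside the finite set `{0} ∪ S` defines `f`.
The Lagrange interpolation polynomials of the eigenvalues, evaluated at `f`, send `v` to the
individual basis vectors, so every `f`-invariant subspace containing `v` contains the whole basis.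
-/

open Polynomial Module

theorem LinearEquiv.exists_apply_eq_of_ne_zero {K V : Type*} [Field K] [AddCommGroup V]
    [Module K V] {u v : V} (hu : u ≠ 0) (hv : v ≠ 0) : ∃ g : V ≃ₗ[K] V, g u = v := by
  let e := (toSpanNonzeroSingleton K V u hu).symm ≪≫ₗ toSpanNonzeroSingleton K V v hv
  obtain ⟨g, hg⟩ := Submodule.exists_linearEquiv_restrict_eq e
  refine ⟨g, ?_⟩
  have hgu := hg ⟨u, Submodule.mem_span_singleton_self u⟩
  have hu1 : (toSpanNonzeroSingleton K V u hu).symm ⟨u, _⟩ = 1 :=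
    (LinearEquiv.symm_apply_eq _).2 (toSpanNonzeroSingleton_one K V u hu).symm
  simpa [e, hu1] using hgu.symm

theorem Module.Basis.sum_ne_zero {ι R M : Type*} [Fintype ι] [Nonempty ι] [Ring R]
    [Nontrivial R] [AddCommGroup M] [Module R M] (b : Basis ι R M) : ∑ i, b i ≠ 0 := by
  intro h
  have := Fintype.linearIndependent_iff.1 b.linearIndependent (fun _ => 1) (by simpa using h)
  exact one_ne_zero (this (Classical.arbitrary ι))

theorem Module.Basis.exists_sum_eq {ι K V : Type*} [Fintype ι] [Field K]
    [AddCommGroup V] [Module K V] (c : Basis ι K V) {v : V} (hv : v ≠ 0) :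
    ∃ b : Basis ι K V, ∑ i, b i = v := by
  have : Nontrivial V := nontrivial_of_ne v 0 hv
  have := c.index_nonempty
  obtain ⟨g, hg⟩ := LinearEquiv.exists_apply_eq_of_ne_zero (K := K) c.sum_ne_zero hv
  exact ⟨c.map g, by simp [← hg, map_sum]⟩

theorem Set.Infinite.exists_injective_mem {α : Type*} {s : Set α} (hs : s.Infinite)
    (ι : Type*) [Countable ι] : ∃ β : ι → α, Function.Injective β ∧ ∀ i, β i ∈ s := by
  obtain ⟨e, he⟩ := exists_injective_nat ι
  let φ := hs.natEmbedding
  exact ⟨fun i => φ (e i), fun i j h => he (φ.injective (Subtype.ext h)), fun i => (φ (e i)).2⟩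

theorem Polynomial.aeval_apply_mem_of_invariant {R M : Type*} [CommSemiring R]
    [AddCommMonoid M] [Module R M] {f : End R M} {W : Submodule R M}
    (hW : ∀ x ∈ W, f x ∈ W) (p : R[X]) {x : M} (hx : x ∈ W) : aeval f p x ∈ W := by
  induction p using Polynomial.induction_on with
  | C a => simpa using W.smul_mem a hx
  | add p q hp hq => simpa using add_mem hp hq
  | monomial n a h =>
    rw [pow_succ', mul_left_comm, map_mul, aeval_X, End.mul_apply]
    exact hW _ h

theorem Module.End.aeval_lagrangeBasis_apply_sum {ι K V : Type*} [Fintype ι] [DecidableEq ι]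
    [Field K] [AddCommGroup V] [Module K V] {f : End K V} {b : ι → V} {β : ι → K}
    (hβ : Function.Injective β) (hfb : ∀ i, f (b i) = β i • b i) (i : ι) :
    aeval f (Lagrange.basis Finset.univ β i) (∑ j, b j) = b i := by
  simp_rw [map_sum, aeval_apply_of_mem_apply_eq_smul (hfb _)]
  rw [Finset.sum_eq_single i]
  · simp [Lagrange.eval_basis_self hβ.injOn]
  · intro j _ hji
    simp [Lagrange.eval_basis_of_ne hji.symm]
  · simp

theorem Module.Basis.eq_top_of_invariant_of_sum_mem {ι K V : Type*} [Fintype ι]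
    [Field K] [AddCommGroup V] [Module K V] {f : End K V} (b : Basis ι K V) {β : ι → K}
    (hβ : Function.Injective β) (hfb : ∀ i, f (b i) = β i • b i) {W : Submodule K V}
    (hW : ∀ x ∈ W, f x ∈ W) (hv : ∑ i, b i ∈ W) : W = ⊤ := by
  classical
  rw [eq_top_iff, ← b.span_eq, Submodule.span_le, Set.range_subset_iff]
  intro i
  rw [← End.aeval_lagrangeBasis_apply_sum hβ hfb i]
  exact aeval_apply_mem_of_invariant hW _ hv

theorem exists_automorphism_generic_eigenbasis_general {k V : Type*} [Field k] [Infinite k]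
    [AddCommGroup V] [Module k V] [FiniteDimensional k V] {n : ℕ}
    (hn : Module.finrank k V = n)
    (v : V) (hv : v ≠ 0) (S : Finset k) :
    ∃ (f : V ≃ₗ[k] V) (b : Module.Basis (Fin n) k V) (β : Fin n → k),
      Function.Injective β ∧ (∀ i, β i ≠ 0 ∧ β i ∉ S) ∧
      (∀ i, f (b i) = β i • b i) ∧ (v = ∑ i, b i) ∧
      (∀ W : Submodule k V, (∀ x ∈ W, f x ∈ W) → W ≠ ⊤ → v ∉ W) := by
  classical
  obtain ⟨b, rfl⟩ := (finBasisOfFinrankEq k V hn).exists_sum_eq hv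
  obtain ⟨β, hβ, hβS⟩ :=
    (insert (0 : k) S).finite_toSet.infinite_compl.exists_injective_mem (Fin n)
  simp only [Set.mem_compl_iff, Finset.mem_coe, Finset.mem_insert, not_or] at hβS
  let f := b.equiv (b.unitsSMul fun i => Units.mk0 (β i) (hβS i).1) (Equiv.refl _)
  have hfb : ∀ i, f (b i) = β i • b i := fun i => by simp [f, Basis.unitsSMul_apply]
  exact ⟨f, b, β, hβ, hβS, hfb, rfl, fun W hW hWtop hvW =>
    hWtop (b.eq_top_of_invariant_of_sum_mem (f := f.toLinearMap) hβ hfb hW hvW)⟩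

/-- over an infinite field, for a nonzero vector `v` and a finite
set `S ⊆ k^×`, there is an automorphism with distinct eigenvalues avoiding `S`
and an eigenbasis summing to `v`; in particular `v` lies in no proper invariant
subspace. -/
theorem exists_automorphism_generic_eigenbasis {k V : Type*} [Field k] [Infinite k]
    [AddCommGroup V] [Module k V] [FiniteDimensional k V] {n : ℕ}
    (hn : Module.finrank k V = n)
    (v : V) (hv : v ≠ 0) (S : Finset k) (hS : (0 : k) ∉ S) :
    ∃ (f : V ≃ₗ[k] V) (b : Module.Basis (Fin n) k V) (β : Fin n → k),
      Function.Injective β ∧ (∀ i, β i ≠ 0 ∧ β i ∉ S) ∧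
      (∀ i, f (b i) = β i • b i) ∧ (v = ∑ i, b i) ∧
      (∀ W : Submodule k V, (∀ x ∈ W, f x ∈ W) → W ≠ ⊤ → v ∉ W) :=
  exists_automorphism_generic_eigenbasis_general hn v hv S
end

section
/- Let k be a field, n ≥ 4, and let V = ∧² k^n be the second exterior power of the standard representation of GL_n(k). Then V is not (n−1)-thick as a representation of GL_n(k): specifically, the subspace W = e₁ ∧ k^n of ∧² k^n satisfies W ∩ gW ≠ 0 for every g ∈ GL_n(k). -/
/-!
Write `u = g e₁`, so that `g W = u ∧ kⁿ`. The spaces `e₁ ∧ kⁿ` and `u ∧ kⁿ` always meet: in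
`e₁ ∧ u` when `e₁` and `u` are independent, and otherwise they coincide. Hence no translate of `W`
is transverse to a subspace `V₂ ⊇ W` of complementary dimension, and such a `V₂` exists because
`dim W = n - 1 ≤ C(n, 2) - (n - 1)` once `n ≥ 4`.
-/

open ExteriorAlgebra Module

namespace Submodule

variable {K V : Type*} [Field K] [AddCommGroup V] [Module K V]

theorem exists_le_finrank_eq [FiniteDimensional K V] (W : Submodule K V) {d : ℕ}
    (hWd : finrank K W ≤ d) (hd : d ≤ finrank K V) :
    ∃ U : Submodule K V, W ≤ U ∧ finrank K U = d := by
  induction d with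
  | zero => exact ⟨W, le_rfl, by omega⟩
  | succ d ih =>
    rcases hWd.eq_or_lt with hW | hW
    · exact ⟨W, le_rfl, hW⟩
    obtain ⟨U, hWU, hU⟩ := ih (by omega) (by omega)
    obtain ⟨v, hv⟩ : ∃ v, v ∉ U := by
      by_contra! hU_top
      have : U = ⊤ := eq_top_iff.2 fun v _ => hU_top v
      rw [this, finrank_top] at hU
      omega
    exact ⟨U ⊔ K ∙ v, hWU.trans le_sup_left, by rw [finrank_sup_span_singleton hv, hU]⟩

theorem exists_le_le_finrank_eq {W S : Submodule K V} [FiniteDimensional K S]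
    (hWS : W ≤ S) {d : ℕ} (hWd : finrank K W ≤ d) (hd : d ≤ finrank K S) :
    ∃ U : Submodule K V, W ≤ U ∧ U ≤ S ∧ finrank K U = d := by
  have hW : finrank K (W.comap S.subtype) = finrank K W :=
    (comapSubtypeEquivOfLe hWS).finrank_eq
  obtain ⟨U, hWU, hU⟩ := (W.comap S.subtype).exists_le_finrank_eq (hW ▸ hWd) hd
  refine ⟨U.map S.subtype, ?_, S.map_subtype_le U, by rwa [finrank_map_subtype_eq]⟩
  simpa [map_comap_subtype, inf_eq_right.2 hWS] using map_mono (f := S.subtype) hWU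

end Submodule

section

variable {K E G : Type*} [Field K] [AddCommGroup E] [Module K E]

/-- `S` is a representation of `G` through `ρ`, realised inside an ambient module `E`. -/
def IsThick (S : Submodule K E) (ρ : G → E →ₗ[K] E) (d : ℕ) : Prop :=
  ∀ V₁ V₂ : Submodule K E, V₁ ≤ S → V₂ ≤ S → finrank K V₁ = d → finrank K V₂ = finrank K S - d →
    ∃ g, V₁.map (ρ g) ⊓ V₂ = ⊥ ∧ V₁.map (ρ g) ⊔ V₂ = S

theorem not_isThick_of_forall_inf_map_ne_bot {S W : Submodule K E} [FiniteDimensional K S]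
    {ρ : G → E →ₗ[K] E} {d : ℕ} (hWS : W ≤ S) (hW : finrank K W = d)
    (hd : 2 * d ≤ finrank K S) (hmeet : ∀ g, W ⊓ W.map (ρ g) ≠ ⊥) : ¬ IsThick S ρ d := by
  intro hthick
  obtain ⟨V₂, hWV₂, hV₂S, hV₂⟩ :=
    Submodule.exists_le_le_finrank_eq hWS (d := finrank K S - d) (by omega) (Nat.sub_le _ _)
  obtain ⟨g, hdisj, -⟩ := hthick W V₂ hWS hV₂S hW hV₂
  exact hmeet g (eq_bot_iff.2 fun x hx => hdisj ▸ ⟨hx.2, hWV₂ hx.1⟩)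

end

namespace ExteriorAlgebra

variable {k M : Type*} [Field k] [AddCommGroup M] [Module k M]

theorem ι_mul_ι_ne_zero {x y : M} (hxy : LinearIndependent k ![x, y]) : ι k x * ι k y ≠ 0 := by
  let s : Set.powersetCard (Fin 2) 2 :=
    Set.powersetCard.ofFinEmbEquiv (OrderIso.refl (Fin 2)).toOrderEmbedding
  have hs : (exteriorPower.ιMulti_family k 2 ![x, y] s : ExteriorAlgebra k M) = ι k x * ι k y := by
    simp [s, exteriorPower.ιMulti_family, ιMulti_apply]
  rw [← hs]
  exact fun h => (exteriorPower.ιMulti_family_linearIndependent_field 2 hxy).ne_zero s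
    (Subtype.ext h)

variable (k) in
def wedgeLeft (x : M) : M →ₗ[k] ExteriorAlgebra k M := LinearMap.mulLeft k (ι k x) ∘ₗ ι k

@[simp]
theorem wedgeLeft_apply (x y : M) : wedgeLeft k x y = ι k x * ι k y := rfl

theorem span_setOf_ι_mul_ι_eq_range_wedgeLeft (x : M) :
    Submodule.span k {z | ∃ y : M, z = ι k x * ι k y} = LinearMap.range (wedgeLeft k x) := by
  have hset : {z | ∃ y : M, z = ι k x * ι k y} = LinearMap.range (wedgeLeft k x) := by
    ext z
    simp [eq_comm]
  rw [hset, Submodule.span_eq]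

theorem range_wedgeLeft_le_exteriorPower_two (x : M) :
    LinearMap.range (wedgeLeft k x) ≤ ⋀[k]^2 M := by
  rintro _ ⟨y, rfl⟩
  rw [exteriorPower, pow_two]
  exact Submodule.mul_mem_mul (LinearMap.mem_range_self _ x) (LinearMap.mem_range_self _ y)

theorem ker_wedgeLeft {x : M} (hx : x ≠ 0) : LinearMap.ker (wedgeLeft k x) = k ∙ x := by
  refine le_antisymm (fun y hy => ?_) ?_
  · by_contra hyx
    refine ι_mul_ι_ne_zero ((LinearIndependent.pair_iff' hx).2 fun a hay => hyx ?_) hy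
    exact hay ▸ Submodule.smul_mem _ a (Submodule.mem_span_singleton_self x)
  · rw [Submodule.span_singleton_le_iff_mem]
    exact ι_sq_zero x

theorem finrank_range_wedgeLeft [FiniteDimensional k M] {x : M} (hx : x ≠ 0) :
    finrank k (LinearMap.range (wedgeLeft k x)) = finrank k M - 1 := by
  have := LinearMap.finrank_range_add_finrank_ker (wedgeLeft k x)
  rw [ker_wedgeLeft hx, finrank_span_singleton hx] at this
  omega

theorem map_range_wedgeLeft (g : M ≃ₗ[k] M) (x : M) :
    (LinearMap.range (wedgeLeft k x)).map (ExteriorAlgebra.map (g : M →ₗ[k] M)).toLinearMap =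
      LinearMap.range (wedgeLeft k (g x)) := by
  rw [← LinearMap.range_comp]
  have : (ExteriorAlgebra.map (g : M →ₗ[k] M)).toLinearMap ∘ₗ wedgeLeft k x =
      wedgeLeft k (g x) ∘ₗ (g : M →ₗ[k] M) := by
    ext y
    simp
  rw [this, LinearMap.range_comp_of_range_eq_top _ (LinearEquiv.range g)]

theorem range_wedgeLeft_inf_ne_bot (hM : 1 < finrank k M) {x y : M} (hx : x ≠ 0) (hy : y ≠ 0) :
    LinearMap.range (wedgeLeft k x) ⊓ LinearMap.range (wedgeLeft k y) ≠ ⊥ := by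
  rw [Submodule.ne_bot_iff]
  by_cases hxy : LinearIndependent k ![x, y]
  · refine ⟨ι k x * ι k y, ⟨⟨y, rfl⟩, ⟨-x, ?_⟩⟩, ι_mul_ι_ne_zero hxy⟩
    simp [eq_neg_of_add_eq_zero_left (ι_add_mul_swap x y)]
  · obtain ⟨a, rfl⟩ : ∃ a : k, a • x = y := by
      simpa [LinearIndependent.pair_iff' hx] using hxy
    have ha : a ≠ 0 := by rintro rfl; simp at hy
    obtain ⟨z, hxz⟩ := exists_linearIndependent_pair_of_one_lt_finrank hM hx
    refine ⟨ι k x * ι k z, ⟨⟨z, rfl⟩, ⟨a⁻¹ • z, ?_⟩⟩, ι_mul_ι_ne_zero hxz⟩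
    simp [smul_smul, ha]

end ExteriorAlgebra

/-- for `n ≥ 4`, the second exterior power of the standard
representation of `GL_n(k)` is not `(n-1)`-thick: the subspace `W = e₁ ∧ kⁿ`
satisfies `W ⊓ gW ≠ 0` for every `g`. -/
theorem wedge_two_standard_not_thick {k : Type*} [Field k] {n : ℕ} (hn : 4 ≤ n)
    (W : Submodule k (ExteriorAlgebra k (Fin n → k)))
    (hWdef : W = Submodule.span k {x | ∃ v : Fin n → k,
        x = ExteriorAlgebra.ι k (Pi.single (⟨0, by omega⟩ : Fin n) (1 : k)) *
            ExteriorAlgebra.ι k v}) :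
    (∀ g : (Fin n → k) ≃ₗ[k] (Fin n → k),
        W ⊓ W.map (ExteriorAlgebra.map
          (g : (Fin n → k) →ₗ[k] (Fin n → k))).toLinearMap ≠ ⊥) ∧
    ¬ (∀ V₁ V₂ : Submodule k (ExteriorAlgebra k (Fin n → k)),
        V₁ ≤ ⋀[k]^2 (Fin n → k) → V₂ ≤ ⋀[k]^2 (Fin n → k) →
        Module.finrank k V₁ = n - 1 →
        Module.finrank k V₂ =
          Module.finrank k (⋀[k]^2 (Fin n → k) : Submodule k _) - (n - 1) →
        ∃ g : (Fin n → k) ≃ₗ[k] (Fin n → k),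
          (V₁.map (ExteriorAlgebra.map
              (g : (Fin n → k) →ₗ[k] (Fin n → k))).toLinearMap) ⊓ V₂ = ⊥ ∧
          (V₁.map (ExteriorAlgebra.map
              (g : (Fin n → k) →ₗ[k] (Fin n → k))).toLinearMap) ⊔ V₂ =
            ⋀[k]^2 (Fin n → k)) := by
  set e : Fin n → k := Pi.single ⟨0, by omega⟩ 1
  have he : e ≠ 0 := Pi.single_ne_zero_iff.2 one_ne_zero
  rw [span_setOf_ι_mul_ι_eq_range_wedgeLeft] at hWdef
  subst hWdef
  have hmeet (g : (Fin n → k) ≃ₗ[k] (Fin n → k)) :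
      LinearMap.range (wedgeLeft k e) ⊓ (LinearMap.range (wedgeLeft k e)).map
        (ExteriorAlgebra.map (g : (Fin n → k) →ₗ[k] (Fin n → k))).toLinearMap ≠ ⊥ := by
    rw [map_range_wedgeLeft]
    exact range_wedgeLeft_inf_ne_bot (by rw [finrank_fin_fun]; omega) he
      (g.map_ne_zero_iff.2 he)
  refine ⟨hmeet, not_isThick_of_forall_inf_map_ne_bot (range_wedgeLeft_le_exteriorPower_two e)
    (by rw [finrank_range_wedgeLeft he, finrank_fin_fun]) ?_ hmeet⟩
  have h4 : 4 * (n - 1) ≤ n * (n - 1) := Nat.mul_le_mul_right _ hn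
  rw [exteriorPower.finrank_eq, finrank_fin_fun, Nat.choose_two_right]
  omega
end
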